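/- Let $x, y, z$ be natural numbers. For real $n \neq 0$, define $$S(n) \;=\; \sum_{k=0}^{\min\{x,y,z\}} \frac{n+2k}{n}\cdot\frac{(n)_k\,(-1)^k\,\frac{x!}{(x-k)!}\,\frac{y!}{(y-k)!}\,\frac{z!}{(z-k)!}}{k!\,(x+n+1)_k\,(y+n+1)_k\,(z+n+1)_k},$$ where $(q)_k = q(q+1)\cdots(q+k-1)$ with $(q)_0 = 1$. Then $S(n)$ tends to $\dfrac{x!\,y!\,z!\,(x+y+z)!}{(x+y)!\,(y+z)!\,(x+z)!}$ as $n \to 0$ within $\mathbb{R} \setminus \{0\}$. -/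

import Mathlib

/-!
For `k ≥ 1` one has `(n + 2k)/n · (n)_k = (n + 2k) (n + 1)_{k-1}`, so every summand of `S` extends
continuously to `n = 0`, where `(n + 2k)/n · (n)_k` becomes `2 k!`. The limit is therefore
`(x! y! z!)² ∑_{|k| ≤ min x y z} (-1)^k / ((x+k)! (x-k)! (y+k)! (y-k)! (z+k)! (z-k)!)`,
and this symmetric sum is evaluated by Dixon's identity, proved by a Wilf–Zeilberger induction
on `x`.
-/

open Filter Topology Finset Nat

section IntervalSums

theorem sum_Icc_neg_natCast_add_one {M : Type*} [AddCommMonoid M] (f : ℤ → M) (N : ℕ) :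
    ∑ k ∈ Icc (-((N : ℤ) + 1)) (N + 1), f k =
      f (-((N : ℤ) + 1)) + (∑ k ∈ Icc (-(N : ℤ)) N, f k + f (N + 1)) := by
  rw [neg_add', ← insert_Icc_left_eq_Icc_sub_one (by omega), sum_insert (by simp),
    ← insert_Icc_right_eq_Icc_add_one (by omega), sum_insert (by simp)]
  abel

theorem sum_Icc_neg_sub_telescope {M : Type*} [AddCommGroup M] (G : ℤ → M) (N : ℕ) :
    ∑ k ∈ Icc (-(N : ℤ)) N, (G (k + 1) - G k) = G (N + 1) - G (-N) := by
  induction N with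
  | zero => simp
  | succ N ih =>
    push_cast
    rw [sum_Icc_neg_natCast_add_one, ih]
    abel_nf

theorem sum_Icc_neg_eq_sum_range_of_even {R : Type*} [Semiring R] (f : ℤ → R)
    (hf : ∀ k, f (-k) = f k) (N : ℕ) :
    ∑ k ∈ Icc (-(N : ℤ)) N, f k = ∑ k ∈ range (N + 1), (if k = 0 then 1 else 2) * f k := by
  induction N with
  | zero => simp
  | succ N ih =>
    push_cast
    rw [sum_Icc_neg_natCast_add_one, ih, sum_range_succ _ (N + 1), hf, if_neg N.succ_ne_zero]
    push_cast
    rw [two_mul]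
    abel

end IntervalSums

section Dixon

variable {K : Type*} [Field K]

/-- Extended by `0` to negative integers, so that `invFactorial (m - 1) = m * invFactorial m`
holds for every integer `m`. -/
def invFactorial : ℤ → K
  | (n : ℕ) => (n ! : K)⁻¹
  | Int.negSucc _ => 0

theorem invFactorial_natCast (n : ℕ) : invFactorial (n : ℤ) = (n ! : K)⁻¹ := rfl

theorem invFactorial_of_neg {m : ℤ} (hm : m < 0) : invFactorial m = (0 : K) := by
  obtain ⟨n, rfl⟩ := Int.eq_negSucc_of_lt_zero hm
  rfl

theorem invFactorial_sub_one [CharZero K] (m : ℤ) :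
    invFactorial (m - 1) = (m : K) * invFactorial m := by
  rcases lt_or_ge 0 m with hm | hm
  · obtain ⟨n, rfl⟩ : ∃ n : ℕ, m = n + 1 := ⟨(m - 1).toNat, by omega⟩
    rw [add_sub_cancel_right, ← Nat.cast_succ, invFactorial_natCast, invFactorial_natCast,
      factorial_succ]
    push_cast
    field_simp
  · rw [invFactorial_of_neg (by omega)]
    rcases hm.lt_or_eq with hm | rfl
    · rw [invFactorial_of_neg hm, mul_zero]
    · simp

/-- `(-1)^k C(a+b, a+k) C(b+c, b+k) C(c+a, c+k) / ((a+b)! (b+c)! (c+a)!)`. -/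
def dixonTerm (a b c : ℕ) (k : ℤ) : K :=
  (-1) ^ k * (invFactorial (a + k) * invFactorial (a - k)) *
    (invFactorial (b + k) * invFactorial (b - k)) * (invFactorial (c + k) * invFactorial (c - k))

/-- The Wilf–Zeilberger certificate of Dixon's identity for the recurrence in `a`. -/
def dixonCertificate (a b c : ℕ) (k : ℤ) : K :=
  -(-1) ^ k * invFactorial (a + k) * invFactorial (a + 1 - k) * invFactorial (b + k - 1) *
    invFactorial (b - k) * invFactorial (c + k - 1) * invFactorial (c - k)

theorem dixonTerm_neg (a b c : ℕ) (k : ℤ) : dixonTerm a b c (-k) = (dixonTerm a b c k : K) := by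
  simp only [dixonTerm, zpow_neg, ← inv_zpow, inv_neg_one, sub_neg_eq_add, ← sub_eq_add_neg]
  ring

theorem dixonTerm_eq_zero_of_min_lt {a b c : ℕ} {k : ℤ} (h : min a (min b c) < |k|) :
    dixonTerm a b c k = (0 : K) := by
  have hvanish : ∀ n : ℕ, (n : ℤ) < |k| →
      invFactorial ((n : ℤ) + k) * invFactorial ((n : ℤ) - k) = (0 : K) := by
    intro n hn
    rcases lt_abs.1 hn with hk | hk
    · rw [invFactorial_of_neg (by omega : (n : ℤ) - k < 0), mul_zero]
    · rw [invFactorial_of_neg (by omega : (n : ℤ) + k < 0), zero_mul]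
  simp only [Nat.cast_min, min_lt_iff] at h
  rcases h with h | h | h <;> simp [dixonTerm, hvanish _ h]

theorem dixonTerm_recurrence [CharZero K] (a b c : ℕ) (k : ℤ) :
    2 * ((a + 1) * (a + b + 1) * (a + c + 1) * dixonTerm (a + 1) b c k -
      (a + b + c + 1) * dixonTerm a b c k) = (dixonCertificate a b c (k + 1) - dixonCertificate a b c k : K) := by
  have shift : ∀ m : ℤ, invFactorial (m - 1) = (m : K) * invFactorial m := invFactorial_sub_one
  have sign : (-1 : K) ^ (k + 1) = -(-1) ^ k := by rw [zpow_add_one₀ (by norm_num), mul_neg_one]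
  simp only [dixonTerm, dixonCertificate, sign]
  -- shift every factorial to the arguments of `dixonTerm (a + 1) b c k`; what is left is polynomial
  rw [show ((a : ℤ) + k) = (a + 1 + k) - 1 by ring, shift,
    show ((a : ℤ) - k) = (a + 1 - k) - 1 by ring, shift,
    show ((a : ℤ) + (k + 1)) = (a + 1 + k) by ring,
    show ((a : ℤ) + 1 - (k + 1)) = (a + 1 - k) - 1 by ring, shift,
    show ((b : ℤ) + (k + 1) - 1) = b + k by ring,
    show ((b : ℤ) - (k + 1)) = b - k - 1 by ring, shift,
    show ((c : ℤ) + (k + 1) - 1) = c + k by ring,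
    show ((c : ℤ) - (k + 1)) = c - k - 1 by ring, shift,
    shift, shift]
  push_cast
  ring

theorem sum_dixonTerm [CharZero K] (a b c N : ℕ) (haN : a ≤ N) :
    ∑ k ∈ Icc (-(N : ℤ)) N, dixonTerm a b c k =
      ((a + b + c)! : K) / (a ! * b ! * c ! * (a + b)! * (b + c)! * (a + c)!) := by
  induction a with
  | zero =>
    rw [sum_eq_single 0 (fun k _ hk => dixonTerm_eq_zero_of_min_lt (by simpa using hk))
      (by simp)]
    have h0 : invFactorial (0 : ℤ) = (1 : K) := by simpa using invFactorial_natCast (K := K) 0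
    have hbc : ((b + c)! : K) ≠ 0 := Nat.cast_ne_zero.2 (factorial_ne_zero _)
    simp [dixonTerm, invFactorial_natCast, h0]
    field_simp
  | succ a ih =>
    have htel := sum_Icc_neg_sub_telescope (dixonCertificate (K := K) a b c) N
    simp only [← dixonTerm_recurrence, ← mul_sum, sum_sub_distrib, ih (by omega)] at htel
    have hvanish : dixonCertificate (K := K) a b c (N + 1) = 0 ∧ dixonCertificate (K := K) a b c (-N) = 0 := by
      refine ⟨?_, ?_⟩
      · rw [dixonCertificate, invFactorial_of_neg (show (a : ℤ) + 1 - (N + 1) < 0 by omega)]; simp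
      · rw [dixonCertificate, invFactorial_of_neg (show (a : ℤ) + -N < 0 by omega)]; simp
    rw [hvanish.1, hvanish.2, sub_zero] at htel
    have hα : ((a : K) + 1) * (a + b + 1) * (a + c + 1) ≠ 0 := by norm_cast
    have hrhs : ((a : K) + 1) * (a + b + 1) * (a + c + 1) *
        (((a + 1 + b + c)! : K) / ((a + 1)! * b ! * c ! * (a + 1 + b)! * (b + c)! * (a + 1 + c)!)) =
        (a + b + c + 1) * ((a + b + c)! / (a ! * b ! * c ! * (a + b)! * (b + c)! * (a + c)!)) := by
      rw [show a + 1 + b + c = (a + b + c) + 1 by ring, show a + 1 + b = (a + b) + 1 by ring,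
        show a + 1 + c = (a + c) + 1 by ring, factorial_succ (a + b + c), factorial_succ (a + b),
        factorial_succ (a + c), factorial_succ a, mul_div_assoc', mul_div_assoc',
        div_eq_div_iff (by norm_cast; simp [factorial_ne_zero])
          (by norm_cast; simp [factorial_ne_zero])]
      push_cast
      ring
    refine mul_left_cancel₀ hα ?_
    rw [hrhs]
    linear_combination htel / 2

theorem sum_dixonTerm_of_min_le [CharZero K] (a b c N : ℕ) (hN : min a (min b c) ≤ N) :
    ∑ k ∈ Icc (-(N : ℤ)) N, dixonTerm a b c k =
      ((a + b + c)! : K) / (a ! * b ! * c ! * (a + b)! * (b + c)! * (a + c)!) := by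
  rw [← sum_dixonTerm a b c (max N a) (le_max_right _ _)]
  refine sum_subset (Icc_subset_Icc (by omega) (by omega)) fun k _ hk => ?_
  refine dixonTerm_eq_zero_of_min_lt (lt_of_le_of_lt (b := (N : ℤ)) (by omega) ?_)
  rw [mem_Icc, not_and_or, not_le, not_le] at hk
  exact lt_abs.2 (by omega)

end Dixon

theorem add_two_mul_div_mul_ascPochhammer_eval {K : Type*} [Field K] (k : ℕ) {n : K}
    (hn : n ≠ 0) : (n + 2 * k) / n * (ascPochhammer K k).eval n =
      (ascPochhammer K k).eval n + 2 * k * (ascPochhammer K (k - 1)).eval (n + 1) := by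
  cases k with
  | zero => simp [hn]
  | succ j =>
    simp only [ascPochhammer_succ_left, Polynomial.eval_mul, Polynomial.eval_X,
      Polynomial.eval_comp, Polynomial.eval_add, Polynomial.eval_one, add_tsub_cancel_right]
    field_simp

/-- The `k`-th summand of `S n`, with the factor `n` of `(n)_k` cancelled against `(n + 2k)/n`. -/
noncomputable def dougallSummand (x y z k : ℕ) (n : ℝ) : ℝ :=
  ((ascPochhammer ℝ k).eval n + 2 * k * (ascPochhammer ℝ (k - 1)).eval (n + 1)) * (-1) ^ k *
      ((x ! : ℝ) / (x - k)!) * ((y ! : ℝ) / (y - k)!) * ((z ! : ℝ) / (z - k)!) /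
    (k ! * (ascPochhammer ℝ k).eval (x + n + 1) * (ascPochhammer ℝ k).eval (y + n + 1) *
      (ascPochhammer ℝ k).eval (z + n + 1))

theorem dougallSummand_eq (x y z k : ℕ) {n : ℝ} (hn : n ≠ 0) :
    (n + 2 * k) / n *
          ((ascPochhammer ℝ k).eval n * (-1 : ℝ) ^ k *
            ((x.factorial : ℝ) / ((x - k).factorial : ℝ)) *
            ((y.factorial : ℝ) / ((y - k).factorial : ℝ)) *
            ((z.factorial : ℝ) / ((z - k).factorial : ℝ))) /
          ((k.factorial : ℝ) *
            (ascPochhammer ℝ k).eval ((x : ℝ) + n + 1) *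
            (ascPochhammer ℝ k).eval ((y : ℝ) + n + 1) *
            (ascPochhammer ℝ k).eval ((z : ℝ) + n + 1)) = dougallSummand x y z k n := by
  rw [dougallSummand, ← add_two_mul_div_mul_ascPochhammer_eval k hn]
  ring

theorem continuousAt_dougallSummand (x y z k : ℕ) : ContinuousAt (dougallSummand x y z k) 0 := by
  have hpos : ∀ m : ℕ, 0 < (ascPochhammer ℝ k).eval ((m : ℝ) + 0 + 1) :=
    fun m => ascPochhammer_pos k _ (by positivity)
  refine ContinuousAt.div (by fun_prop) (by fun_prop) ?_
  have := hpos x; have := hpos y; have := hpos z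
  positivity

theorem dougallSummand_zero {x y z k : ℕ} (hk : k ≤ min x (min y z)) :
    dougallSummand x y z k 0 =
      ((x ! * y ! * z ! : ℝ)) ^ 2 * ((if k = 0 then 1 else 2) * dixonTerm x y z k) := by
  have hP : ∀ m : ℕ, (ascPochhammer ℝ k).eval ((m : ℝ) + 0 + 1) = (m + k)! / m ! := fun m => by
    rw [add_zero, eq_div_iff (by positivity), mul_comm]
    exact_mod_cast factorial_mul_ascPochhammer ℝ m k
  have hP0 : (ascPochhammer ℝ k).eval 0 + 2 * k * (ascPochhammer ℝ (k - 1)).eval (0 + 1) =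
      (if k = 0 then 1 else 2) * k ! := by
    cases k <;> simp [factorial_succ]; ring
  have hinv : ∀ m : ℕ, k ≤ m → invFactorial ((m : ℤ) + k) * invFactorial ((m : ℤ) - k) =
      (((m + k)! : ℝ) * (m - k)!)⁻¹ := fun m hm => by
    rw [← Nat.cast_add, ← Nat.cast_sub hm, invFactorial_natCast, invFactorial_natCast, mul_inv]
  simp only [le_min_iff] at hk
  rw [dougallSummand, dixonTerm, hP0, hP, hP, hP, hinv x (by omega), hinv y (by omega),
    hinv z (by omega), zpow_natCast]
  field_simp

/-- The Dougall–Ramanujan `₅F₄(1)` series, viewed as a function of a real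
parameter `n`, tends, as `n → 0` within `ℝ \ {0}`, to the value obtained by
formally setting `n = 0` in the right-hand side of the Dougall–Ramanujan
identity, namely `x! y! z! (x+y+z)! / ((x+y)! (y+z)! (x+z)!)`. -/
theorem dougall_ramanujan_limit_at_zero (x y z : ℕ)
    (S : ℝ → ℝ)
    (hS : ∀ n : ℝ, n ≠ 0 → S n =
      ∑ k ∈ Finset.range (min x (min y z) + 1),
        (n + 2 * k) / n *
          ((ascPochhammer ℝ k).eval n * (-1 : ℝ) ^ k *
            ((x.factorial : ℝ) / ((x - k).factorial : ℝ)) *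
            ((y.factorial : ℝ) / ((y - k).factorial : ℝ)) *
            ((z.factorial : ℝ) / ((z - k).factorial : ℝ))) /
          ((k.factorial : ℝ) *
            (ascPochhammer ℝ k).eval ((x : ℝ) + n + 1) *
            (ascPochhammer ℝ k).eval ((y : ℝ) + n + 1) *
            (ascPochhammer ℝ k).eval ((z : ℝ) + n + 1))) :
    Tendsto S (𝓝[≠] (0 : ℝ))
      (𝓝 (((x.factorial : ℝ) * (y.factorial : ℝ) * (z.factorial : ℝ) *
            ((x + y + z).factorial : ℝ)) /
          (((x + y).factorial : ℝ) * ((y + z).factorial : ℝ) *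
            ((x + z).factorial : ℝ)))) := by
  set m := min x (min y z)
  have hS_eq : S =ᶠ[𝓝[≠] 0] fun n => ∑ k ∈ range (m + 1), dougallSummand x y z k n :=
    eventually_nhdsWithin_of_forall fun n hn => by
      rw [hS n hn]
      exact sum_congr rfl fun k _ => dougallSummand_eq x y z k hn
  have hlim : Tendsto (fun n => ∑ k ∈ range (m + 1), dougallSummand x y z k n) (𝓝[≠] 0)
      (𝓝 (∑ k ∈ range (m + 1), dougallSummand x y z k 0)) :=
    (tendsto_finsetSum _ fun k _ => continuousAt_dougallSummand x y z k).mono_left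
      nhdsWithin_le_nhds
  have hval : ∑ k ∈ range (m + 1), dougallSummand x y z k 0 =
      x ! * y ! * z ! * (x + y + z)! / ((x + y)! * (y + z)! * (x + z)!) := by
    rw [sum_congr rfl fun k hk => dougallSummand_zero (mem_range_succ_iff.1 hk), ← mul_sum,
      ← sum_Icc_neg_eq_sum_range_of_even _ (dixonTerm_neg x y z),
      sum_dixonTerm_of_min_le x y z m le_rfl]
    field_simp
  exact hval ▸ hlim.congr' hS_eq.symm
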